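/- arXiv:0804.4354 — 4 statements merged into one kernel-verified Lean document; each statement's English description precedes it below -/
import Mathlib

section
/- Let u(ξ) = U₁·tanh(C₁·ξ) + V₁·sech(C₁·ξ) + V₀ with real constants U₁, V₁, V₀ and C₁ ≠ 0, and let v, σ, C be real numbers. Then (S − v)·u(ξ) − (v²σ/2)·u′(ξ) = C holds for every ξ ∈ ℝ if and only if the following algebraic system holds: (S − v)·(U₁ + V₀) = C; V₁·(2·(S − v) + v²σ·C₁) = 0; 2·(S − v)·V₀ − 2·v²σ·C₁·U₁ = 2·C; V₁·(2·(S − v) − v²σ·C₁) = 0; (S − v)·(V₀ − U₁) = C. -/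
/-!
Both `u` and `u′` are polynomials in `tanh (C₁ξ)` and `sech (C₁ξ)`, so the equation says that
`a + b tanh + c sech + d sech² + e tanh·sech` vanishes identically, with coefficients read off
from `U₁, V₁, V₀`. These five functions are linearly independent: the odd part `tanh (b + e sech)`
and the even part `a + c sech + d sech²` are tested at the points `0, ±1, ±2`, where `sech` takes
three distinct values. The algebraic system is just the vanishing of the five coefficients.
-/

open Real

section Vandermonde

variable {K : Type*} [Field K]

theorem eq_zero_of_linear_eq_zero {a b y₁ y₂ : K} (hy : y₁ ≠ y₂)
    (h₁ : a + b * y₁ = 0) (h₂ : a + b * y₂ = 0) : a = 0 ∧ b = 0 := by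
  have hb : b = 0 := by
    have : b * (y₁ - y₂) = 0 := by linear_combination h₁ - h₂
    exact (mul_eq_zero.mp this).resolve_right (sub_ne_zero.mpr hy)
  exact ⟨by linear_combination h₁ - y₁ * hb, hb⟩

theorem eq_zero_of_quadratic_eq_zero {a b c y₁ y₂ y₃ : K}
    (h₁₂ : y₁ ≠ y₂) (h₁₃ : y₁ ≠ y₃) (h₂₃ : y₂ ≠ y₃)
    (h₁ : a + b * y₁ + c * y₁ ^ 2 = 0) (h₂ : a + b * y₂ + c * y₂ ^ 2 = 0)
    (h₃ : a + b * y₃ + c * y₃ ^ 2 = 0) : a = 0 ∧ b = 0 ∧ c = 0 := by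
  have h₁₂' : b + c * (y₁ + y₂) = 0 := by
    have : (y₁ - y₂) * (b + c * (y₁ + y₂)) = 0 := by linear_combination h₁ - h₂
    exact (mul_eq_zero.mp this).resolve_left (sub_ne_zero.mpr h₁₂)
  have h₁₃' : b + c * (y₁ + y₃) = 0 := by
    have : (y₁ - y₃) * (b + c * (y₁ + y₃)) = 0 := by linear_combination h₁ - h₃
    exact (mul_eq_zero.mp this).resolve_left (sub_ne_zero.mpr h₁₃)
  obtain ⟨hb, hc⟩ := eq_zero_of_linear_eq_zero (by simpa using h₂₃) h₁₂' h₁₃'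
  exact ⟨by linear_combination h₁ - y₁ * hb - y₁ ^ 2 * hc, hb, hc⟩

end Vandermonde

namespace Real

theorem hasDerivAt_tanh (x : ℝ) : HasDerivAt tanh (1 / cosh x ^ 2) x := by
  have h := (hasDerivAt_sinh x).div (hasDerivAt_cosh x) (cosh_pos x).ne'
  rw [show sinh / cosh = tanh from funext fun y => (tanh_eq_sinh_div_cosh y).symm] at h
  refine h.congr_deriv ?_
  rw [← cosh_sq_sub_sinh_sq x]
  ring

theorem hasDerivAt_tanh_sech_comp (U V W k x : ℝ) :
    HasDerivAt (fun x => U * tanh (k * x) + V * (1 / cosh (k * x)) + W)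
      (k * (U * (1 / cosh (k * x)) ^ 2 - V * (tanh (k * x) * (1 / cosh (k * x))))) x := by
  have hlin : HasDerivAt (fun x : ℝ => k * x) k x := by
    simpa using (hasDerivAt_id x).const_mul k
  have htanh := (hasDerivAt_tanh (k * x)).comp x hlin
  have hsech := ((hasDerivAt_cosh (k * x)).inv (cosh_pos (k * x)).ne').comp x hlin
  simp only [one_div]
  refine (((htanh.const_mul U).add (hsech.const_mul V)).add_const W).congr_deriv ?_
  rw [tanh_eq_sinh_div_cosh]
  field_simp
  ring

theorem cosh_inv_ne_of_abs_ne {x y : ℝ} (h : |x| ≠ |y|) : 1 / cosh x ≠ 1 / cosh y := by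
  rw [Ne, one_div, one_div, inv_inj]
  rcases h.lt_or_gt with h | h
  · exact (cosh_lt_cosh.mpr h).ne
  · exact (cosh_lt_cosh.mpr h).ne'

theorem forall_add_tanh_sech_eq_zero_iff {a b c d e : ℝ} :
    (∀ x, a + b * tanh x + c * (1 / cosh x) + d * (1 / cosh x) ^ 2
        + e * (tanh x * (1 / cosh x)) = 0)
      ↔ a = 0 ∧ b = 0 ∧ c = 0 ∧ d = 0 ∧ e = 0 := by
  refine ⟨fun h => ?_, ?_⟩
  · have hodd : ∀ x ≠ 0, b + e * (1 / cosh x) = 0 := by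
      intro x hx
      have hx' : tanh x ≠ 0 := fun h0 => hx (tanh_injective (h0.trans tanh_zero.symm))
      have : (2 * tanh x) * (b + e * (1 / cosh x)) = 0 := by
        have hneg := h (-x)
        rw [tanh_neg, cosh_neg] at hneg
        linear_combination h x - hneg
      exact (mul_eq_zero.mp this).resolve_left (mul_ne_zero two_ne_zero hx')
    have heven : ∀ x, a + c * (1 / cosh x) + d * (1 / cosh x) ^ 2 = 0 := by
      intro x
      have hneg := h (-x)
      rw [tanh_neg, cosh_neg] at hneg
      linear_combination (h x + hneg) / 2
    have habs : |(0 : ℝ)| ≠ |1| ∧ |(0 : ℝ)| ≠ |2| ∧ |(1 : ℝ)| ≠ |2| := by norm_num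
    obtain ⟨hb, he⟩ := eq_zero_of_linear_eq_zero (cosh_inv_ne_of_abs_ne habs.2.2)
      (hodd 1 one_ne_zero) (hodd 2 two_ne_zero)
    obtain ⟨ha, hc, hd⟩ := eq_zero_of_quadratic_eq_zero (cosh_inv_ne_of_abs_ne habs.1)
      (cosh_inv_ne_of_abs_ne habs.2.1) (cosh_inv_ne_of_abs_ne habs.2.2)
      (heven 0) (heven 1) (heven 2)
    exact ⟨ha, hb, hc, hd, he⟩
  · rintro ⟨rfl, rfl, rfl, rfl, rfl⟩ x
    ring

end Real

theorem stmt_8_general (σ : ℝ)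
    (S : ℝ)
    (U₁ V₁ V₀ C₁ : ℝ) (hC₁ : C₁ ≠ 0) (v C : ℝ) (u : ℝ → ℝ)
    (hu : ∀ ξ : ℝ, u ξ =
      U₁ * Real.tanh (C₁ * ξ) + V₁ * (1 / Real.cosh (C₁ * ξ)) + V₀) :
    (∀ ξ : ℝ, (S - v) * u ξ - v ^ 2 * σ / 2 * deriv u ξ = C)
      ↔ ((S - v) * (U₁ + V₀) = C
        ∧ V₁ * (2 * (S - v) + v ^ 2 * σ * C₁) = 0
        ∧ 2 * (S - v) * V₀ - 2 * v ^ 2 * σ * C₁ * U₁ = 2 * C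
        ∧ V₁ * (2 * (S - v) - v ^ 2 * σ * C₁) = 0
        ∧ (S - v) * (V₀ - U₁) = C) := by
  set P : ℝ → ℝ := fun x => ((S - v) * V₀ - C) + (S - v) * U₁ * tanh x
    + (S - v) * V₁ * (1 / cosh x) + -(v ^ 2 * σ / 2 * C₁ * U₁) * (1 / cosh x) ^ 2
    + v ^ 2 * σ / 2 * C₁ * V₁ * (tanh x * (1 / cosh x)) with hP
  have hequation : ∀ ξ, (S - v) * u ξ - v ^ 2 * σ / 2 * deriv u ξ - C = P (C₁ * ξ) := by
    intro ξ
    rw [show u = _ from funext hu, (hasDerivAt_tanh_sech_comp U₁ V₁ V₀ C₁ ξ).deriv, hP]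
    ring
  calc (∀ ξ, (S - v) * u ξ - v ^ 2 * σ / 2 * deriv u ξ = C)
      ↔ ∀ ξ, P (C₁ * ξ) = 0 := forall_congr' fun ξ => by rw [← hequation, sub_eq_zero]
    _ ↔ ∀ x, P x = 0 :=
      ⟨fun h x => by simpa [mul_div_cancel₀ x hC₁] using h (x / C₁), fun h ξ => h _⟩
    _ ↔ _ := forall_add_tanh_sech_eq_zero_iff
    _ ↔ _ := by
      constructor
      · rintro ⟨ha, hb, hc, hd, he⟩
        exact ⟨by linear_combination ha + hb, by linear_combination 2 * hc + 2 * he,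
          by linear_combination 2 * ha + 4 * hd, by linear_combination 2 * hc - 2 * he,
          by linear_combination ha - hb⟩
      · rintro ⟨h₁, h₂, h₃, h₄, h₅⟩
        exact ⟨by linear_combination (h₁ + h₅) / 2, by linear_combination (h₁ - h₅) / 2,
          by linear_combination (h₂ + h₄) / 4, by linear_combination (h₃ - h₁ - h₅) / 4,
          by linear_combination (h₂ - h₄) / 4⟩

/-- For `u(ξ) = U₁·tanh(C₁ξ) + V₁·sech(C₁ξ) + V₀` with `C₁ ≠ 0`,
the first-order equation `(S − v)·u(ξ) − (v²σ/2)·u′(ξ) = C` holds for every `ξ`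
iff the algebraic system
`(S−v)(U₁+V₀) = C`, `V₁(2(S−v)+v²σC₁) = 0`, `2(S−v)V₀ − 2v²σC₁U₁ = 2C`,
`V₁(2(S−v)−v²σC₁) = 0`, `(S−v)(V₀−U₁) = C` holds. -/
theorem stmt_8 (σ μ Reh : ℝ) (hμ : μ * Reh ≠ 0) (m : ℕ) (γ : ℕ → ℝ)
    (S : ℝ) (hS : S = (2 * σ / (μ * Reh)) * ∑ k ∈ Finset.Icc 1 m, (k : ℝ) * γ k)
    (U₁ V₁ V₀ C₁ : ℝ) (hC₁ : C₁ ≠ 0) (v C : ℝ) (u : ℝ → ℝ)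
    (hu : ∀ ξ : ℝ, u ξ =
      U₁ * Real.tanh (C₁ * ξ) + V₁ * (1 / Real.cosh (C₁ * ξ)) + V₀) :
    (∀ ξ : ℝ, (S - v) * u ξ - v ^ 2 * σ / 2 * deriv u ξ = C)
      ↔ ((S - v) * (U₁ + V₀) = C
        ∧ V₁ * (2 * (S - v) + v ^ 2 * σ * C₁) = 0
        ∧ 2 * (S - v) * V₀ - 2 * v ^ 2 * σ * C₁ * U₁ = 2 * C
        ∧ V₁ * (2 * (S - v) - v ^ 2 * σ * C₁) = 0
        ∧ (S - v) * (V₀ - U₁) = C) :=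
  stmt_8_general σ S U₁ V₁ V₀ C₁ hC₁ v C u hu
end

section
/- Let u(ξ) = U₁·tanh(C₁·ξ) + V₁·sech(C₁·ξ) + V₀ with real constants U₁, V₁, V₀ and C₁ ≠ 0, and let v ≠ 0, σ ≠ 0 and C be real numbers. If (S − v)·u(ξ) − (v²σ/2)·u′(ξ) = C holds for every ξ ∈ ℝ, then U₁ = 0, V₁ = 0 and (S − v)·V₀ = C; in particular u is the constant function V₀. -/
/-!
With `x = C₁ ξ`, `a = S - v` and `b = v² σ C₁ / 2 ≠ 0`, the relation reads
`a (U₁ tanh x + V₁ sech x + V₀) - b (U₁ - V₁ sinh x) / cosh² x = C`.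
Subtracting the relation at `-x` leaves `2 sinh x (a U₁ cosh x + b V₁) / cosh² x = 0`;
since `cosh 1 ≠ cosh 2`, this forces `a U₁ = 0` and `V₁ = 0`. What remains is
`a V₀ - b U₁ / cosh² x = C`, and comparing `x = 0` with `x = 1` gives `U₁ = 0`.
-/

open Real

theorem hasDerivAt_tanh_add_sech (U V W c ξ : ℝ) :
    HasDerivAt (fun ξ => U * tanh (c * ξ) + V * (1 / cosh (c * ξ)) + W)
      (c * (U - V * sinh (c * ξ)) / cosh (c * ξ) ^ 2) ξ := by
  have hcosh : cosh (c * ξ) ≠ 0 := (cosh_pos _).ne'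
  have hlin : HasDerivAt (fun ξ => c * ξ) c ξ := by
    simpa using (hasDerivAt_id ξ).const_mul c
  have hsinh_comp : HasDerivAt (fun ξ => sinh (c * ξ)) (cosh (c * ξ) * c) ξ :=
    (hasDerivAt_sinh _).comp ξ hlin
  have hcosh_comp : HasDerivAt (fun ξ => cosh (c * ξ)) (sinh (c * ξ) * c) ξ :=
    (hasDerivAt_cosh _).comp ξ hlin
  have H := (((hsinh_comp.div hcosh_comp hcosh).const_mul U).add
    ((hcosh_comp.inv hcosh).const_mul V)).add_const W
  have hfun : (fun ξ => U * tanh (c * ξ) + V * (1 / cosh (c * ξ)) + W) =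
      fun ξ => U * (sinh (c * ξ) / cosh (c * ξ)) + V * (cosh (c * ξ))⁻¹ + W := by
    simp only [tanh_eq_sinh_div_cosh, one_div]
  rw [hfun]
  refine H.congr_deriv ?_
  field_simp
  linear_combination c * U * cosh_sq_sub_sinh_sq (c * ξ)

theorem eq_zero_of_tanh_add_sech_sub_deriv_eq_const {a b U V W C : ℝ} (hb : b ≠ 0)
    (h : ∀ x, a * (U * tanh x + V * (1 / cosh x) + W) - b * ((U - V * sinh x) / cosh x ^ 2) = C) :
    U = 0 ∧ V = 0 ∧ a * W = C := by
  have hodd : ∀ x, sinh x ≠ 0 → a * U * cosh x + b * V = 0 := fun x hx => by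
    have hcosh : cosh x ≠ 0 := (cosh_pos x).ne'
    have hx' := h (-x)
    rw [tanh_neg, cosh_neg, sinh_neg] at hx'
    have : sinh x * (a * U * cosh x + b * V) = 0 := by
      have := h x
      rw [tanh_eq_sinh_div_cosh] at this hx'
      field_simp at this hx'
      linear_combination (this - hx') / 2
    exact (mul_eq_zero.mp this).resolve_left hx
  have hcosh12 : cosh 1 ≠ cosh 2 := by
    refine (cosh_lt_cosh.mpr ?_).ne
    norm_num
  have hUV : a * U = 0 ∧ V = 0 := by
    have h1 := hodd 1 (sinh_pos_iff.mpr one_pos).ne'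
    have h2 := hodd 2 (sinh_pos_iff.mpr two_pos).ne'
    have hU : a * U = 0 := by
      have : a * U * (cosh 1 - cosh 2) = 0 := by linear_combination h1 - h2
      exact (mul_eq_zero.mp this).resolve_right (sub_ne_zero.mpr hcosh12)
    refine ⟨hU, (mul_eq_zero.mp ?_).resolve_left hb⟩
    linear_combination h1 - cosh 1 * hU
  obtain ⟨haU, rfl⟩ := hUV
  have h0 := h 0
  have h1 := h 1
  simp only [tanh_zero, cosh_zero, sinh_zero, zero_mul, mul_zero, add_zero, sub_zero, one_pow,
    div_one] at h0 h1
  have hsech : 1 / cosh 1 ^ 2 < 1 := by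
    have := one_lt_cosh.mpr (one_ne_zero (α := ℝ))
    rw [div_lt_one (by positivity)]
    nlinarith
  have hU : U = 0 := by
    have : b * U * (1 - 1 / cosh 1 ^ 2) = 0 := by linear_combination h1 - h0 - tanh 1 * haU
    have hbU := (mul_eq_zero.mp this).resolve_right (sub_pos.mpr hsech).ne'
    exact (mul_eq_zero.mp hbU).resolve_left hb
  subst hU
  exact ⟨rfl, rfl, by linarith⟩

theorem stmt_9_general (σ : ℝ) (S : ℝ)
    (U₁ V₁ V₀ C₁ : ℝ) (hC₁ : C₁ ≠ 0) (v : ℝ) (hv : v ≠ 0) (hσ : σ ≠ 0) (C : ℝ)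
    (u : ℝ → ℝ)
    (hu : ∀ ξ : ℝ, u ξ =
      U₁ * Real.tanh (C₁ * ξ) + V₁ * (1 / Real.cosh (C₁ * ξ)) + V₀)
    (h : ∀ ξ : ℝ, (S - v) * u ξ - v ^ 2 * σ / 2 * deriv u ξ = C) :
    U₁ = 0 ∧ V₁ = 0 ∧ (S - v) * V₀ = C ∧ ∀ ξ : ℝ, u ξ = V₀ := by
  have hderiv (ξ : ℝ) : deriv u ξ = C₁ * (U₁ - V₁ * sinh (C₁ * ξ)) / cosh (C₁ * ξ) ^ 2 := by
    rw [funext hu]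
    exact (hasDerivAt_tanh_add_sech U₁ V₁ V₀ C₁ ξ).deriv
  have hb : v ^ 2 * σ / 2 * C₁ ≠ 0 := by positivity
  obtain ⟨rfl, rfl, hV₀⟩ := eq_zero_of_tanh_add_sech_sub_deriv_eq_const (a := S - v)
    (U := U₁) (V := V₁) (W := V₀) (C := C) hb fun x => by
    have hx := h (x / C₁)
    rw [hu, hderiv, mul_div_cancel₀ _ hC₁] at hx
    linear_combination hx
  exact ⟨rfl, rfl, hV₀, fun ξ => by simp [hu]⟩

/-- For `u(ξ) = U₁·tanh(C₁ξ) + V₁·sech(C₁ξ) + V₀` with `C₁ ≠ 0`,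
`v ≠ 0`, `σ ≠ 0`, if `(S − v)·u(ξ) − (v²σ/2)·u′(ξ) = C` for every `ξ`, then
`U₁ = 0`, `V₁ = 0` and `(S − v)·V₀ = C`; in particular `u` is the constant
function `V₀`. -/
theorem stmt_9 (σ μ Reh : ℝ) (hμ : μ * Reh ≠ 0) (m : ℕ) (γ : ℕ → ℝ)
    (S : ℝ) (hS : S = (2 * σ / (μ * Reh)) * ∑ k ∈ Finset.Icc 1 m, (k : ℝ) * γ k)
    (U₁ V₁ V₀ C₁ : ℝ) (hC₁ : C₁ ≠ 0) (v : ℝ) (hv : v ≠ 0) (hσ : σ ≠ 0) (C : ℝ)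
    (u : ℝ → ℝ)
    (hu : ∀ ξ : ℝ, u ξ =
      U₁ * Real.tanh (C₁ * ξ) + V₁ * (1 / Real.cosh (C₁ * ξ)) + V₀)
    (h : ∀ ξ : ℝ, (S - v) * u ξ - v ^ 2 * σ / 2 * deriv u ξ = C) :
    U₁ = 0 ∧ V₁ = 0 ∧ (S - v) * V₀ = C ∧ ∀ ξ : ℝ, u ξ = V₀ :=
  stmt_9_general σ S U₁ V₁ V₀ C₁ hC₁ v hv hσ C u hu h
end

section
/- Let σ ≠ 0, v ≠ 0 and C₁ ≠ 0 be real numbers and U₁, V₁, V₀, C real unknowns. The algebraic system consisting of the five equations 2·(S − v)·(V₀ − U₁) − (v²·C₁·σ/2)·(4·U₁ + 2·V₁) = C; 2·(S − v)·V₁ = 0; 2·(S − v)·V₀ = 0; (2·(S − v) + v²·C₁·σ)·V₁ = 0; (S − v)·(U₁ + V₀) = 0 holds if and only if either (v = S, V₁ = 0 and U₁ = −C/(2·C₁·v²·σ), with V₀ arbitrary), or (v ≠ S, U₁ = V₁ = V₀ = 0 and C = 0). -/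
/-! When `S ≠ v` the equations `2(S − v)V₁ = 0`, `2(S − v)V₀ = 0` and `(S − v)(U₁ + V₀) = 0` force
`V₁ = V₀ = U₁ = 0`, and then the first equation gives `C = 0`. When `S = v` only the terms carrying
`b = v²C₁σ ≠ 0` survive: `bV₁ = 0` gives `V₁ = 0`, and the first equation becomes `−2bU₁ = C`. -/

section

variable {K : Type*} [Field K] [CharZero K]

/-- The system of the theorem with `a = S − v` and `b = v²C₁σ`. -/
def CoeffSystem (a b U₁ V₁ V₀ C : K) : Prop :=
  2 * a * (V₀ - U₁) - b / 2 * (4 * U₁ + 2 * V₁) = C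
    ∧ 2 * a * V₁ = 0
    ∧ 2 * a * V₀ = 0
    ∧ (2 * a + b) * V₁ = 0
    ∧ a * (U₁ + V₀) = 0

theorem coeffSystem_zero_iff {b : K} (hb : b ≠ 0) (U₁ V₁ V₀ C : K) :
    CoeffSystem 0 b U₁ V₁ V₀ C ↔ V₁ = 0 ∧ U₁ = -C / (2 * b) := by
  simp only [CoeffSystem, mul_zero, zero_mul, zero_add, zero_sub, and_true,
    mul_eq_zero, hb, false_or, eq_self, true_and]
  constructor
  · rintro ⟨hC, rfl⟩
    refine ⟨rfl, ?_⟩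
    field_simp
    linear_combination -hC
  · rintro ⟨rfl, rfl⟩
    refine ⟨?_, rfl⟩
    field_simp
    ring

theorem coeffSystem_iff_of_ne_zero {a : K} (ha : a ≠ 0) (b U₁ V₁ V₀ C : K) :
    CoeffSystem a b U₁ V₁ V₀ C ↔ U₁ = 0 ∧ V₁ = 0 ∧ V₀ = 0 ∧ C = 0 := by
  constructor
  · rintro ⟨hC, hV₁, hV₀, -, hU₁⟩
    obtain rfl : V₁ = 0 := by simpa [ha, two_ne_zero] using hV₁
    obtain rfl : V₀ = 0 := by simpa [ha, two_ne_zero] using hV₀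
    obtain rfl : U₁ = 0 := by simpa [ha] using hU₁
    exact ⟨rfl, rfl, rfl, by simpa using hC.symm⟩
  · rintro ⟨rfl, rfl, rfl, rfl⟩
    simp [CoeffSystem]

end

theorem stmt_10_general (σ : ℝ)
    (S : ℝ)
    (hσ : σ ≠ 0) (v : ℝ) (hv : v ≠ 0) (C₁ : ℝ) (hC₁ : C₁ ≠ 0)
    (U₁ V₁ V₀ C : ℝ) :
    (2 * (S - v) * (V₀ - U₁) - v ^ 2 * C₁ * σ / 2 * (4 * U₁ + 2 * V₁) = C
        ∧ 2 * (S - v) * V₁ = 0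
        ∧ 2 * (S - v) * V₀ = 0
        ∧ (2 * (S - v) + v ^ 2 * C₁ * σ) * V₁ = 0
        ∧ (S - v) * (U₁ + V₀) = 0)
      ↔ ((v = S ∧ V₁ = 0 ∧ U₁ = -C / (2 * C₁ * v ^ 2 * σ))
        ∨ (v ≠ S ∧ U₁ = 0 ∧ V₁ = 0 ∧ V₀ = 0 ∧ C = 0)) := by
  change CoeffSystem (S - v) (v ^ 2 * C₁ * σ) U₁ V₁ V₀ C ↔ _
  rcases eq_or_ne v S with rfl | hvS
  · have hb : v ^ 2 * C₁ * σ ≠ 0 := by positivity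
    rw [sub_self, coeffSystem_zero_iff hb,
      show 2 * (v ^ 2 * C₁ * σ) = 2 * C₁ * v ^ 2 * σ by ring]
    simp
  · rw [coeffSystem_iff_of_ne_zero (sub_ne_zero.2 hvS.symm)]
    simp [hvS]

/-- For `σ ≠ 0`, `v ≠ 0`, `C₁ ≠ 0`, the algebraic system
`2(S−v)(V₀−U₁) − (v²C₁σ/2)(4U₁+2V₁) = C`, `2(S−v)V₁ = 0`, `2(S−v)V₀ = 0`,
`(2(S−v)+v²C₁σ)V₁ = 0`, `(S−v)(U₁+V₀) = 0` holds iff either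
(`v = S`, `V₁ = 0`, `U₁ = −C/(2C₁v²σ)`, `V₀` arbitrary) or
(`v ≠ S`, `U₁ = V₁ = V₀ = 0`, `C = 0`). -/
theorem stmt_10 (σ μ Reh : ℝ) (hμ : μ * Reh ≠ 0) (m : ℕ) (γ : ℕ → ℝ)
    (S : ℝ) (hS : S = (2 * σ / (μ * Reh)) * ∑ k ∈ Finset.Icc 1 m, (k : ℝ) * γ k)
    (hσ : σ ≠ 0) (v : ℝ) (hv : v ≠ 0) (C₁ : ℝ) (hC₁ : C₁ ≠ 0)
    (U₁ V₁ V₀ C : ℝ) :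
    (2 * (S - v) * (V₀ - U₁) - v ^ 2 * C₁ * σ / 2 * (4 * U₁ + 2 * V₁) = C
        ∧ 2 * (S - v) * V₁ = 0
        ∧ 2 * (S - v) * V₀ = 0
        ∧ (2 * (S - v) + v ^ 2 * C₁ * σ) * V₁ = 0
        ∧ (S - v) * (U₁ + V₀) = 0)
      ↔ ((v = S ∧ V₁ = 0 ∧ U₁ = -C / (2 * C₁ * v ^ 2 * σ))
        ∨ (v ≠ S ∧ U₁ = 0 ∧ V₁ = 0 ∧ V₀ = 0 ∧ C = 0)) :=
  stmt_10_general σ S hσ v hv C₁ hC₁ U₁ V₁ V₀ C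
end

section
/- Let σ ≠ 0, v ≠ 0 and C₁ ≠ 0 be real numbers and U₁, V₁, V₀ real constants, and set u(x,t) = U₁·tanh(C₁·(x − v·t)) + V₁·sech(C₁·(x − v·t)) + V₀. Then u satisfies the equivalent equation −∂u/∂t − (σ/2)·∂²u/∂t² + S·∂u/∂x = 0 at every point (x,t) ∈ ℝ² if and only if U₁ = 0 and V₁ = 0, i.e. if and only if u is constant. -/
/-!
`u` is a travelling wave `g (C₁ (x - v t))` with `g = U₁ tanh + V₁ sech + V₀`, so the equation
becomes the ODE `a g' - b g'' = 0` on all of `ℝ`, with `a = C₁ (v + S)` and `b = (σ/2) (C₁ v)² ≠ 0`.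
After multiplying by `cosh³`, the odd part `2 sinh ξ (2 b U₁ - a V₁ cosh ξ)` must vanish; taking
two different values of `cosh ξ` gives `U₁ = 0`, and the even part at `ξ = 0` then gives `V₁ = 0`.
-/

open Real

noncomputable def tanhSechProfile (U V V₀ y : ℝ) : ℝ :=
  U * tanh y + V * (1 / cosh y) + V₀

theorem hasDerivAt_tanhSechProfile (U V V₀ y : ℝ) :
    HasDerivAt (tanhSechProfile U V V₀) ((U - V * sinh y) / cosh y ^ 2) y := by
  have hc : cosh y ≠ 0 := (cosh_pos y).ne'
  have htanh : HasDerivAt (fun z => sinh z / cosh z)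
      ((cosh y * cosh y - sinh y * sinh y) / cosh y ^ 2) y :=
    (hasDerivAt_sinh y).div (hasDerivAt_cosh y) hc
  have hsech : HasDerivAt (fun z => (cosh z)⁻¹) (-sinh y / cosh y ^ 2) y :=
    (hasDerivAt_cosh y).inv hc
  have hprofile : tanhSechProfile U V V₀ = fun z => U * (sinh z / cosh z) + V * (cosh z)⁻¹ + V₀ := by
    funext z
    rw [tanhSechProfile, tanh_eq_sinh_div_cosh, one_div]
  rw [hprofile]
  refine (((htanh.const_mul U).add (hsech.const_mul V)).add_const V₀).congr_deriv ?_
  field_simp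
  linear_combination U * cosh_sq_sub_sinh_sq y

theorem hasDerivAt_sub_mul_sinh_div_cosh_sq (U V y : ℝ) :
    HasDerivAt (fun z => (U - V * sinh z) / cosh z ^ 2)
      ((V * (sinh y ^ 2 - 1) - 2 * U * sinh y) / cosh y ^ 3) y := by
  have hc : cosh y ≠ 0 := (cosh_pos y).ne'
  have hden : HasDerivAt (fun z => cosh z ^ 2) (2 * cosh y * sinh y) y :=
    ((hasDerivAt_cosh y).pow 2).congr_deriv (by ring)
  refine ((((hasDerivAt_sinh y).const_mul V).const_sub U).div hden
    (pow_ne_zero 2 hc)).congr_deriv ?_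
  field_simp
  linear_combination -V * cosh_sq_sub_sinh_sq y

theorem travelingWave_residual_eq {g g' g'' : ℝ → ℝ} (hg : ∀ y, HasDerivAt g (g' y) y)
    (hg' : ∀ y, HasDerivAt g' (g'' y) y) (σ S c v x t : ℝ) :
    - deriv (fun s => g (c * (x - v * s))) t
        - σ / 2 * deriv (fun s => deriv (fun s' => g (c * (x - v * s'))) s) t
        + S * deriv (fun y => g (c * (y - v * t))) x
      = c * (v + S) * g' (c * (x - v * t)) - σ / 2 * (c * v) ^ 2 * g'' (c * (x - v * t)) := by
  have hcoord_t : ∀ s, HasDerivAt (fun s => c * (x - v * s)) (-(c * v)) s := fun s =>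
    ((((hasDerivAt_id s).const_mul v).const_sub x).const_mul c).congr_deriv (by ring)
  have hcoord_x : HasDerivAt (fun y => c * (y - v * t)) c x :=
    (((hasDerivAt_id x).sub_const (v * t)).const_mul c).congr_deriv (by ring)
  have hdt : deriv (fun s => g (c * (x - v * s))) = fun s => g' (c * (x - v * s)) * -(c * v) :=
    funext fun s => ((hg _).comp s (hcoord_t s)).deriv
  have hdtt : deriv (fun s => g' (c * (x - v * s)) * -(c * v)) t
      = g'' (c * (x - v * t)) * -(c * v) * -(c * v) :=
    (((hg' _).comp t (hcoord_t t)).mul_const _).deriv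
  have hdx : deriv (fun y => g (c * (y - v * t))) x = g' (c * (x - v * t)) * c :=
    ((hg _).comp x hcoord_x).deriv
  rw [hdt]
  beta_reduce
  rw [hdtt, hdx]
  ring

theorem forall_travelingCoord_iff {c : ℝ} (hc : c ≠ 0) (v : ℝ) (P : ℝ → Prop) :
    (∀ x t, P (c * (x - v * t))) ↔ ∀ ξ, P ξ := by
  refine ⟨fun h ξ => ?_, fun h x t => h _⟩
  have := h (ξ / c) 0
  rwa [mul_zero, sub_zero, mul_div_cancel₀ ξ hc] at this

theorem eq_zero_of_forall_tanhSech_numerator {a b U V : ℝ} (hb : b ≠ 0)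
    (h : ∀ ξ, a * cosh ξ * (U - V * sinh ξ) + b * (2 * U * sinh ξ + V * (1 - sinh ξ ^ 2)) = 0) :
    U = 0 ∧ V = 0 := by
  have hodd : ∀ ξ, 0 < ξ → 2 * b * U = a * V * cosh ξ := by
    intro ξ hξ
    have hs : sinh ξ ≠ 0 := (sinh_pos_iff.mpr hξ).ne'
    have key : 2 * sinh ξ * (2 * b * U - a * V * cosh ξ) = 0 := by
      have := h (-ξ)
      rw [sinh_neg, cosh_neg] at this
      linear_combination h ξ - this
    linarith [(mul_eq_zero.mp key).resolve_left (mul_ne_zero two_ne_zero hs)]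
  have hcosh : cosh 1 ≠ cosh 2 :=
    (cosh_lt_cosh.mpr (by norm_num [abs_of_pos])).ne
  have haV : a * V = 0 := by
    have := (hodd 1 one_pos).symm.trans (hodd 2 two_pos)
    exact (mul_eq_mul_left_iff.mp this).resolve_left hcosh
  have hU : U = 0 := by
    have := hodd 1 one_pos
    rw [haV, zero_mul] at this
    simpa [hb] using this
  refine ⟨hU, ?_⟩
  have := h 0
  simp only [sinh_zero, cosh_zero, hU] at this
  simpa [hb] using this

theorem forall_tanhSech_ode_iff {a b U V : ℝ} (hb : b ≠ 0) :
    (∀ ξ, a * ((U - V * sinh ξ) / cosh ξ ^ 2)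
        - b * ((V * (sinh ξ ^ 2 - 1) - 2 * U * sinh ξ) / cosh ξ ^ 3) = 0)
      ↔ U = 0 ∧ V = 0 := by
  refine ⟨fun h => eq_zero_of_forall_tanhSech_numerator (a := a) hb fun ξ => ?_, ?_⟩
  · have hc : cosh ξ ≠ 0 := (cosh_pos ξ).ne'
    have := h ξ
    field_simp at this
    linear_combination this
  · rintro ⟨rfl, rfl⟩ ξ
    simp

theorem stmt_13_general (σ : ℝ)
    (S : ℝ)
    (hσ : σ ≠ 0) (v : ℝ) (hv : v ≠ 0) (C₁ : ℝ) (hC₁ : C₁ ≠ 0)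
    (U₁ V₁ V₀ : ℝ) (u : ℝ → ℝ → ℝ)
    (hu : ∀ x t : ℝ, u x t =
      U₁ * Real.tanh (C₁ * (x - v * t)) + V₁ * (1 / Real.cosh (C₁ * (x - v * t)))
        + V₀) :
    (∀ x t : ℝ,
        - deriv (fun s => u x s) t
        - σ / 2 * deriv (fun s => deriv (fun s' => u x s') s) t
        + S * deriv (fun y => u y t) x = 0)
      ↔ (U₁ = 0 ∧ V₁ = 0) := by
  obtain rfl : u = fun x t => tanhSechProfile U₁ V₁ V₀ (C₁ * (x - v * t)) :=
    funext fun x => funext fun t => hu x t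
  simp only [travelingWave_residual_eq (hasDerivAt_tanhSechProfile U₁ V₁ V₀)
    (hasDerivAt_sub_mul_sinh_div_cosh_sq U₁ V₁)]
  rw [forall_travelingCoord_iff hC₁ v
    (fun ξ => C₁ * (v + S) * ((U₁ - V₁ * sinh ξ) / cosh ξ ^ 2)
      - σ / 2 * (C₁ * v) ^ 2 * ((V₁ * (sinh ξ ^ 2 - 1) - 2 * U₁ * sinh ξ) / cosh ξ ^ 3) = 0)]
  exact forall_tanhSech_ode_iff (by positivity)

/-- For `σ ≠ 0`, `v ≠ 0`, `C₁ ≠ 0` and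
`u(x,t) = U₁·tanh(C₁(x−vt)) + V₁·sech(C₁(x−vt)) + V₀`, the equivalent equation
`−∂u/∂t − (σ/2)·∂²u/∂t² + S·∂u/∂x = 0` holds at every point `(x,t)` iff
`U₁ = 0` and `V₁ = 0`, i.e. iff `u` is constant. -/
theorem stmt_13 (σ μ Reh : ℝ) (hμ : μ * Reh ≠ 0) (m : ℕ) (γ : ℕ → ℝ)
    (S : ℝ) (hS : S = (2 * σ / (μ * Reh)) * ∑ k ∈ Finset.Icc 1 m, (k : ℝ) * γ k)
    (hσ : σ ≠ 0) (v : ℝ) (hv : v ≠ 0) (C₁ : ℝ) (hC₁ : C₁ ≠ 0)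
    (U₁ V₁ V₀ : ℝ) (u : ℝ → ℝ → ℝ)
    (hu : ∀ x t : ℝ, u x t =
      U₁ * Real.tanh (C₁ * (x - v * t)) + V₁ * (1 / Real.cosh (C₁ * (x - v * t)))
        + V₀) :
    (∀ x t : ℝ,
        - deriv (fun s => u x s) t
        - σ / 2 * deriv (fun s => deriv (fun s' => u x s') s) t
        + S * deriv (fun y => u y t) x = 0)
      ↔ (U₁ = 0 ∧ V₁ = 0) :=
  stmt_13_general σ S hσ v hv C₁ hC₁ U₁ V₁ V₀ u hu
end
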